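/- There exist finite simple graphs G1, G2, vertices v1 ∈ G1, v2 ∈ G2, and integers K > 1 and L, such that the K-hop shortest-path-distance color refinement assigns v1 and v2 different colors at iteration L, while DE-1 assigns v1 and v2 equal representations at every iteration. Conversely, there exist finite simple graphs G1', G2' and vertices v1' ∈ G1', v2' ∈ G2' such that DE-1 assigns v1' and v2' different representations at some iteration, while for every K and every iteration the K-hop shortest-path-distance color refinement assigns v1' and v2' equal colors. -/

import Mathlib

/-!
K-hop refinement with the shortest-path kernel sees, for every vertex, how many vertices lie at
each distance from it, but not how they are joined; DE-1 sees adjacency, but distances only to the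
target. In the first pair of graphs the partition by distance from the hub `0` is equitable with
the same parameters in both, so DE-1 never separates the hubs, whereas a vertex at distance two
from the hub has three vertices at distance two in one graph and two in the other. In the second
pair, the prism `C₃ □ K₂` and `K₃,₃`, every vertex has three vertices at distance one, two at
distance two and none further, so K-hop refinement is constant. At its second iteration DE-1
sees whether a neighbour of a neighbour of the target is adjacent to the target, i.e. whether the
target lies on a triangle: it does in the prism, while `K₃,₃` is triangle-free.
-/

namespace KHopStmt9

/-- k-th hop neighbors under the shortest-path-distance kernel: vertices at graph
distance exactly `k` from `v`. -/
noncomputable def Qspd {V : Type*} [Fintype V] (G : SimpleGraph V) (v : V) (k : ℕ) :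
    Finset V := by
  classical
  exact Finset.univ.filter fun u => G.Reachable v u ∧ G.dist v u = k

/-- K-hop color refinement with the spd kernel: all vertices share the constant initial
color, and `c_{l+1}(v) = (c_l(v), ({{c_l(u) : u ∈ Q^{k,spd}_v}})_{k=1,…,K})`, multiset
equality being expressed by color-preserving bijections of the hop neighborhoods. -/
def KhopEquiv {V1 V2 : Type*} [Fintype V1] [Fintype V2] (K : ℕ)
    (G1 : SimpleGraph V1) (G2 : SimpleGraph V2) : ℕ → V1 → V2 → Prop
  | 0, _, _ => True
  | (l + 1), v, u => KhopEquiv K G1 G2 l v u ∧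
      ∀ k : ℕ, 1 ≤ k → k ≤ K →
        ∃ σ : {w // w ∈ Qspd G1 v k} ≃ {w // w ∈ Qspd G2 u k},
          ∀ w : {w // w ∈ Qspd G1 v k}, KhopEquiv K G1 G2 l w.1 (σ w).1

/-- DE-1 color refinement relative to target vertices `v1` (in `G1`) and `v2` (in `G2`):
1-WL refinement started from the initial coloring "graph distance to the target vertex"
(with unreachable vertices, having infinite distance, distinguished from any reachable
vertex). `DE1Equiv G1 v1 G2 v2 l u1 u2` says that `u1` and `u2` receive equal colors at
iteration `l`. -/
def DE1Equiv {V1 V2 : Type*} (G1 : SimpleGraph V1) (v1 : V1)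
    (G2 : SimpleGraph V2) (v2 : V2) : ℕ → V1 → V2 → Prop
  | 0, u1, u2 => G1.dist v1 u1 = G2.dist v2 u2 ∧ (G1.Reachable v1 u1 ↔ G2.Reachable v2 u2)
  | (l + 1), u1, u2 => DE1Equiv G1 v1 G2 v2 l u1 u2 ∧
      ∃ σ : G1.neighborSet u1 ≃ G2.neighborSet u2,
        ∀ w : G1.neighborSet u1, DE1Equiv G1 v1 G2 v2 l w.1 (σ w).1

end KHopStmt9

namespace SimpleGraph

variable {V : Type*} {G : SimpleGraph V} {u v : V}

lemma edist_eq_ite [DecidableEq V] [DecidableRel G.Adj]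
    (h : u = v ∨ G.Adj u v ∨ ∃ w, G.Adj u w ∧ G.Adj w v) :
    G.edist u v = ((if u = v then 0 else if G.Adj u v then 1 else 2 : ℕ) : ℕ∞) := by
  split_ifs with huv hadj
  · exact edist_eq_zero_iff.mpr huv
  · exact edist_eq_one_iff_adj.mpr hadj
  · obtain huv' | hadj' | ⟨w, huw, hwv⟩ := h
    · exact absurd huv' huv
    · exact absurd hadj' hadj
    · exact edist_eq_two_iff.mpr ⟨huv, hadj, w, G.mem_commonNeighbors.mpr ⟨huw, hwv.symm⟩⟩

lemma ediam_le_two_of_forall (h : ∀ u v, u = v ∨ G.Adj u v ∨ ∃ w, G.Adj u w ∧ G.Adj w v) :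
    G.ediam ≤ 2 := by
  classical
  refine ediam_le_iff.mpr fun u v => ?_
  rw [edist_eq_ite (h u v)]
  exact_mod_cast (by split_ifs <;> omega : _ ≤ 2)

end SimpleGraph

lemma Finset.exists_equiv_of_map_val_eq {α β C : Type*} {s : Finset α} {t : Finset β}
    {f : α → C} {g : β → C} (h : s.val.map f = t.val.map g) :
    ∃ σ : s ≃ t, ∀ a, g (σ a) = f a := by
  classical
  have hfiber : ∀ c, Fintype.card {a : s // f a = c} = Fintype.card {b : t // g b = c} := by
    intro c
    rw [Fintype.card_subtype, Fintype.card_subtype, univ_eq_attach, univ_eq_attach,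
      filter_attach (f · = c), filter_attach (g · = c), card_map, card_map, card_attach,
      card_attach]
    have hc := congrArg (Multiset.count c) h
    simp only [Multiset.count_map, eq_comm (a := c)] at hc
    exact hc
  exact ⟨Equiv.ofFiberEquiv fun c => Fintype.equivOfCardEq (hfiber c),
    Equiv.ofFiberEquiv_map (f := fun a : s => f a) (g := fun b : t => g b) _⟩

namespace KHopStmt9

open SimpleGraph Finset

section Qspd

variable {V : Type*} [Fintype V] {G : SimpleGraph V} {u v : V} {k : ℕ}

lemma mem_Qspd : u ∈ Qspd G v k ↔ G.edist v u = k := by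
  simp only [Qspd, mem_filter, mem_univ, true_and]
  refine ⟨fun ⟨hr, hd⟩ => hd ▸ hr.coe_dist_eq_edist.symm, fun h => ?_⟩
  have hr : G.Reachable v u := reachable_of_edist_ne_top (by simp [h])
  exact ⟨hr, by exact_mod_cast hr.coe_dist_eq_edist.trans h⟩

lemma Qspd_one [DecidableRel G.Adj] : Qspd G v 1 = G.neighborFinset v := by
  ext u
  simp [mem_Qspd]

lemma Qspd_two [DecidableEq V] [DecidableRel G.Adj] :
    Qspd G v 2 = univ.filter fun u => v ≠ u ∧ ¬ G.Adj v u ∧ ∃ w, G.Adj v w ∧ G.Adj u w := by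
  ext u
  simp [mem_Qspd, edist_eq_two_iff, Set.Nonempty, mem_commonNeighbors]

lemma Qspd_eq_empty_of_ediam_lt (h : G.ediam < k) : Qspd G v k = ∅ := by
  ext u
  simp only [mem_Qspd, notMem_empty, iff_false]
  exact fun hu => (edist_le_ediam.trans_lt h).ne hu

lemma Qspd_two_eq_neighborFinset_compl [DecidableEq V] [DecidableRel G.Adj] (h : G.ediam ≤ 2) :
    Qspd G v 2 = Gᶜ.neighborFinset v := by
  ext u
  have hle : G.edist v u ≤ 2 := edist_le_ediam.trans h
  have hdist : G.edist v u = 2 ↔ ¬ G.edist v u ≤ 1 := by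
    generalize G.edist v u = e at hle ⊢
    induction e using ENat.recTopCoe with
    | top => simp at hle
    | coe n => norm_cast at hle ⊢; omega
  rw [mem_Qspd, Nat.cast_ofNat, hdist, edist_le_one_iff_adj_or_eq, mem_neighborFinset, compl_adj]
  tauto

end Qspd

section KhopEquiv

variable {V1 V2 : Type*} [Fintype V1] [Fintype V2] {K l k : ℕ}
  {G1 : SimpleGraph V1} {G2 : SimpleGraph V2} {x : V1} {y : V2}

lemma KhopEquiv.exists_mem_Qspd (h : KhopEquiv K G1 G2 (l + 1) x y) (hk : 1 ≤ k) (hkK : k ≤ K)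
    {w : V1} (hw : w ∈ Qspd G1 x k) : ∃ w' ∈ Qspd G2 y k, KhopEquiv K G1 G2 l w w' := by
  obtain ⟨σ, hσ⟩ := h.2 k hk hkK
  exact ⟨σ ⟨w, hw⟩, (σ ⟨w, hw⟩).2, hσ ⟨w, hw⟩⟩

lemma KhopEquiv.card_Qspd_eq (h : KhopEquiv K G1 G2 (l + 1) x y) (hk : 1 ≤ k) (hkK : k ≤ K) :
    #(Qspd G1 x k) = #(Qspd G2 y k) := by
  obtain ⟨σ, -⟩ := h.2 k hk hkK
  simpa using Fintype.card_congr σ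

lemma khopEquiv_of_card_Qspd_eq (h : ∀ x y k, 1 ≤ k → #(Qspd G1 x k) = #(Qspd G2 y k)) :
    ∀ l x y, KhopEquiv K G1 G2 l x y
  | 0, _, _ => trivial
  | l + 1, x, y => ⟨khopEquiv_of_card_Qspd_eq h l x y, fun k hk _ =>
      ⟨Fintype.equivOfCardEq (by simpa using h x y k hk),
        fun _ => khopEquiv_of_card_Qspd_eq h l _ _⟩⟩

lemma khopEquiv_of_isRegularOfDegree_of_ediam_le_two [DecidableRel G1.Adj] [DecidableRel G2.Adj] (hcard : Fintype.card V1 = Fintype.card V2)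
    {d : ℕ} (hreg1 : G1.IsRegularOfDegree d) (hreg2 : G2.IsRegularOfDegree d)
    (hdiam1 : G1.ediam ≤ 2) (hdiam2 : G2.ediam ≤ 2) (l : ℕ) (x : V1) (y : V2) :
    KhopEquiv K G1 G2 l x y := by
  classical
  refine khopEquiv_of_card_Qspd_eq (fun x y k hk => ?_) l x y
  obtain _ | _ | _ | k := k
  · omega
  · rw [Qspd_one, Qspd_one, card_neighborFinset_eq_degree, card_neighborFinset_eq_degree,
      hreg1.degree_eq, hreg2.degree_eq]
  · rw [Qspd_two_eq_neighborFinset_compl hdiam1, Qspd_two_eq_neighborFinset_compl hdiam2,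
      card_neighborFinset_eq_degree, card_neighborFinset_eq_degree, degree_compl, degree_compl,
      hreg1.degree_eq, hreg2.degree_eq, hcard]
  · rw [Qspd_eq_empty_of_ediam_lt (hdiam1.trans_lt (by norm_cast; omega)),
      Qspd_eq_empty_of_ediam_lt (hdiam2.trans_lt (by norm_cast; omega)), card_empty, card_empty]

end KhopEquiv

section DE1Equiv

variable {V1 V2 : Type*} {G1 : SimpleGraph V1} {v1 : V1} {G2 : SimpleGraph V2} {v2 : V2}
  {l : ℕ} {x : V1} {y : V2}

lemma DE1Equiv.dist_eq : ∀ {l : ℕ} {x : V1} {y : V2}, DE1Equiv G1 v1 G2 v2 l x y →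
    G1.dist v1 x = G2.dist v2 y
  | 0, _, _, h => h.1
  | _ + 1, _, _, h => h.1.dist_eq

lemma DE1Equiv.exists_adj (h : DE1Equiv G1 v1 G2 v2 (l + 1) x y) {w : V1} (hw : G1.Adj x w) :
    ∃ w', G2.Adj y w' ∧ DE1Equiv G1 v1 G2 v2 l w w' := by
  obtain ⟨σ, hσ⟩ := h.2
  exact ⟨σ ⟨w, hw⟩, (σ ⟨w, hw⟩).2, hσ ⟨w, hw⟩⟩

lemma DE1Equiv.exists_triangle (h : DE1Equiv G1 v1 G2 v2 2 v1 v2) {a b : V1}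
    (ha : G1.Adj v1 a) (hab : G1.Adj a b) (hb : G1.Adj v1 b) :
    ∃ a' b', G2.Adj v2 a' ∧ G2.Adj a' b' ∧ G2.Adj v2 b' := by
  obtain ⟨a', ha', haa'⟩ := h.exists_adj ha
  obtain ⟨b', hab', hbb'⟩ := haa'.exists_adj hab
  refine ⟨a', b', ha', hab', dist_eq_one_iff_adj.mp ?_⟩
  rw [← hbb'.dist_eq, dist_eq_one_iff_adj.mpr hb]

lemma de1Equiv_of_equitable_coloring [Fintype V1] [Fintype V2] [DecidableRel G1.Adj] [DecidableRel G2.Adj]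
    {C : Type*} (c1 : V1 → C) (c2 : V2 → C)
    (hdist : ∀ x y, c1 x = c2 y → G1.edist v1 x = G2.edist v2 y)
    (hnbr : ∀ x y, c1 x = c2 y →
      (G1.neighborFinset x).val.map c1 = (G2.neighborFinset y).val.map c2) :
    ∀ l x y, c1 x = c2 y → DE1Equiv G1 v1 G2 v2 l x y
  | 0, x, y, h => by
    refine ⟨congrArg ENat.toNat (hdist x y h), ?_⟩
    rw [← edist_ne_top_iff_reachable, ← edist_ne_top_iff_reachable, hdist x y h]
  | l + 1, x, y, h => by
    refine ⟨de1Equiv_of_equitable_coloring c1 c2 hdist hnbr l x y h, ?_⟩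
    obtain ⟨σ, hσ⟩ := Finset.exists_equiv_of_map_val_eq (hnbr x y h)
    let e1 := Equiv.subtypeEquivRight fun w => G1.mem_neighborFinset x w
    let e2 := Equiv.subtypeEquivRight fun w => G2.mem_neighborFinset y w
    exact ⟨e1.symm.trans (σ.trans e2), fun w =>
      de1Equiv_of_equitable_coloring c1 c2 hdist hnbr l _ _ (hσ (e1.symm w)).symm⟩

end DE1Equiv

section Examples

/-- The wheel with hub `0` and rim `1 2 3 4`, each rim edge subdivided by one of `5 6 7 8`. -/
def subdividedWheel : SimpleGraph (Fin 9) := SimpleGraph.fromRel fun x y => (x.val, y.val) ∈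
  [(0, 1), (0, 2), (0, 3), (0, 4), (5, 1), (5, 2), (6, 2), (6, 3), (7, 3), (7, 4), (8, 4), (8, 1)]

/-- Two copies of `K₂,₃`, with parts `{1, 2}, {0, 5, 6}` and `{3, 4}, {0, 7, 8}`, glued at `0`. -/
def gluedK23 : SimpleGraph (Fin 9) := SimpleGraph.fromRel fun x y => (x.val, y.val) ∈
  [(0, 1), (0, 2), (0, 3), (0, 4), (5, 1), (5, 2), (6, 1), (6, 2), (7, 3), (7, 4), (8, 3), (8, 4)]

/-- The triangles `0 1 2` and `3 4 5` joined by the matching `i — i + 3`. -/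
def prism : SimpleGraph (Fin 6) :=
  SimpleGraph.fromRel fun x y => (x.val < 3 ↔ y.val < 3) ∨ y.val = x.val + 3

def k33 : SimpleGraph (Fin 6) := SimpleGraph.fromRel fun x y => x.val < 3 ∧ 3 ≤ y.val

instance : DecidableRel subdividedWheel.Adj := by unfold subdividedWheel; infer_instance
instance : DecidableRel gluedK23.Adj := by unfold gluedK23; infer_instance
instance : DecidableRel prism.Adj := by unfold prism; infer_instance
instance : DecidableRel k33.Adj := by unfold k33; infer_instance

def hubLevel (x : Fin 9) : ℕ := if x = 0 then 0 else if x.val ≤ 4 then 1 else 2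

lemma edist_subdividedWheel (x : Fin 9) : subdividedWheel.edist 0 x = hubLevel x := by
  rw [edist_eq_ite (by revert x; decide)]
  exact congrArg _ (by revert x; decide)

lemma edist_gluedK23 (x : Fin 9) : gluedK23.edist 0 x = hubLevel x := by
  rw [edist_eq_ite (by revert x; decide)]
  exact congrArg _ (by revert x; decide)

lemma de1Equiv_subdividedWheel_gluedK23 (l : ℕ) : DE1Equiv subdividedWheel 0 gluedK23 0 l 0 0 :=
  de1Equiv_of_equitable_coloring hubLevel hubLevel
    (fun x y h => by rw [edist_subdividedWheel, edist_gluedK23, h]) (by decide) l 0 0 rfl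

lemma not_khopEquiv_subdividedWheel_gluedK23 : ¬ KhopEquiv 2 subdividedWheel gluedK23 2 0 0 := by
  intro h
  obtain ⟨w, hw, hKw⟩ := h.exists_mem_Qspd one_le_two le_rfl (w := 5) (by rw [Qspd_two]; decide)
  have h5 : #(Qspd subdividedWheel 5 2) = 3 := by rw [Qspd_two]; decide
  have hw2 : ∀ w ∈ Qspd gluedK23 0 2, #(Qspd gluedK23 w 2) = 2 := by simp only [Qspd_two]; decide
  have hcard := hKw.card_Qspd_eq one_le_two le_rfl
  rw [h5, hw2 w hw] at hcard
  omega

lemma not_de1Equiv_prism_k33 : ¬ DE1Equiv prism 0 k33 0 2 0 0 := fun h => by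
  obtain ⟨a, b, hab⟩ := h.exists_triangle (a := 1) (b := 2) (by decide) (by decide) (by decide)
  exact (by decide : ∀ a b : Fin 6, ¬ (k33.Adj 0 a ∧ k33.Adj a b ∧ k33.Adj 0 b)) a b hab

lemma khopEquiv_prism_k33 (K l : ℕ) : KhopEquiv K prism k33 l 0 0 :=
  khopEquiv_of_isRegularOfDegree_of_ediam_le_two rfl (d := 3)
    (fun v => by revert v; decide) (fun v => by revert v; decide)
    (ediam_le_two_of_forall (by decide)) (ediam_le_two_of_forall (by decide)) l 0 0

end Examples

/-- There exist graphs and vertices `v1`, `v2`, and `K > 1`, `L`,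
such that K-hop spd refinement assigns `v1`, `v2` different colors at iteration `L`
while DE-1 (with targets `v1`, `v2`) assigns them equal representations at every
iteration; conversely there exist graphs and vertices `v1'`, `v2'` separated by DE-1
at some iteration but assigned equal colors by K-hop spd refinement for every `K` and
every iteration. -/
theorem khop_vs_DE1_incomparable :
    (∃ (n1 n2 : ℕ) (G1 : SimpleGraph (Fin n1)) (G2 : SimpleGraph (Fin n2))
        (v1 : Fin n1) (v2 : Fin n2) (K L : ℕ), 1 < K ∧
        ¬ KhopEquiv K G1 G2 L v1 v2 ∧
        ∀ l : ℕ, DE1Equiv G1 v1 G2 v2 l v1 v2) ∧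
    (∃ (n1 n2 : ℕ) (G1' : SimpleGraph (Fin n1)) (G2' : SimpleGraph (Fin n2))
        (v1' : Fin n1) (v2' : Fin n2),
        (∃ l : ℕ, ¬ DE1Equiv G1' v1' G2' v2' l v1' v2') ∧
        ∀ (K l : ℕ), KhopEquiv K G1' G2' l v1' v2') :=
  ⟨⟨9, 9, subdividedWheel, gluedK23, 0, 0, 2, 2, one_lt_two,
    not_khopEquiv_subdividedWheel_gluedK23, de1Equiv_subdividedWheel_gluedK23⟩,
  ⟨6, 6, prism, k33, 0, 0, ⟨2, not_de1Equiv_prism_k33⟩, khopEquiv_prism_k33⟩⟩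

end KHopStmt9
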